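/- arXiv:2104.14473 — 3 statements merged into one kernel-verified Lean document; each statement's English description precedes it below -/
import Mathlib

section
/- Let μ be a partition of n and t a semisimple element of a fixed F-stable maximal torus T_μ of GL_n over F̄_q with Frobenius F. The assignment t ↦ (μ[t,a])_{[a]} sending t to the family of subpartitions indexed by Frobenius-orbits [a] of eigenvalues (where μ[t,a] collects those parts μ_i of μ whose corresponding torus factor T_{μ_i} ≅ GL_1(F_{q^{μ_i}}) lies in the [a]-factor of the centralizer of t) satisfies: two elements t, t' ∈ T_μ^F have μ[t,a] = μ[t',a] for all [a] if and only if t and t' are conjugate under the F-fixed points of the relative Weyl group W_{GL_n}(T_μ)^F. -/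
/-!
The data `(μ i, [t i])` form a multiset, and two tuples have the same multiset of values
exactly when they differ by a permutation of the indices: matching the fibres of the two
tuples value by value gives the permutation. Such a permutation preserves `μ` and sends each
`t' i` into the Frobenius orbit of `t (π i)`; conversely, since `t (π i)` is periodic under
`y ↦ y ^ q`, its orbit is the orbit of any of its points, in particular of `t' i`.
-/

open Function

theorem Finset.univ_val_map_eq_iff_exists_perm {ι α : Type*} [Fintype ι] (f g : ι → α) :
    Finset.univ.val.map f = Finset.univ.val.map g ↔
      ∃ σ : Equiv.Perm ι, ∀ i, f (σ i) = g i := by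
  classical
  constructor
  · intro h
    have hcard : ∀ a, Fintype.card {i // g i = a} = Fintype.card {i // f i = a} := fun a => by
      simpa [Fintype.card_subtype, Multiset.count_map, eq_comm, Finset.card_def,
        Finset.filter_val] using congrArg (Multiset.count a) h.symm
    exact ⟨Equiv.ofFiberEquiv fun a => Fintype.equivOfCardEq (hcard a),
      Equiv.ofFiberEquiv_map _⟩
  · rintro ⟨σ, hσ⟩
    conv_lhs => rw [← Multiset.map_univ_val_equiv σ, Multiset.map_map]
    exact Multiset.map_congr rfl fun i _ => hσ i

theorem setOf_eq_pow_pow_pow_eq_of_periodic {M : Type*} [Monoid M] {x : M} {q ν : ℕ}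
    (hν : 0 < ν) (hx : x ^ q ^ ν = x) (m₀ : ℕ) :
    {y : M | ∃ m : ℕ, y = (x ^ q ^ m₀) ^ q ^ m} = {y : M | ∃ m : ℕ, y = x ^ q ^ m} := by
  have hper : x ^ q ^ (ν * m₀) = x := by
    have hxper : IsPeriodicPt (· ^ q) ν x := by
      simpa [IsPeriodicPt, IsFixedPt, pow_iterate] using hx
    simpa [IsPeriodicPt, IsFixedPt, pow_iterate] using hxper.mul_const m₀
  ext y
  constructor
  · rintro ⟨m, rfl⟩
    exact ⟨m₀ + m, by rw [← pow_mul, ← pow_add]⟩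
  · rintro ⟨m, rfl⟩
    refine ⟨m + (ν - 1) * m₀, ?_⟩
    have hexp : m₀ + (m + (ν - 1) * m₀) = ν * m₀ + m := by
      obtain ⟨ν, rfl⟩ := Nat.exists_eq_add_of_lt hν
      simp only [Nat.add_sub_cancel]; ring
    rw [← pow_mul, ← pow_add, hexp, pow_add, pow_mul, hper]

theorem stmt13_general (p e k : ℕ) [Fact p.Prime]
    (μ : Fin k → ℕ) (hμ : ∀ i, 0 < μ i)
    (t t' : Fin k → (AlgebraicClosure (GaloisField p e))ˣ)
    (ht : ∀ i, t i ^ (p ^ e) ^ μ i = t i) :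
    ((Finset.univ.val.map fun i =>
        ((μ i, {y : (AlgebraicClosure (GaloisField p e))ˣ | ∃ m : ℕ, y = t i ^ (p ^ e) ^ m}) :
          ℕ × Set (AlgebraicClosure (GaloisField p e))ˣ)) =
      (Finset.univ.val.map fun i =>
        ((μ i, {y : (AlgebraicClosure (GaloisField p e))ˣ | ∃ m : ℕ, y = t' i ^ (p ^ e) ^ m}) :
          ℕ × Set (AlgebraicClosure (GaloisField p e))ˣ)))
    ↔ ∃ π : Equiv.Perm (Fin k), (∀ i, μ (π i) = μ i) ∧
        ∀ i, ∃ m : ℕ, t' i = t (π i) ^ (p ^ e) ^ m := by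
  rw [Finset.univ_val_map_eq_iff_exists_perm]
  constructor
  · rintro ⟨π, hπ⟩
    refine ⟨π, fun i => (Prod.mk.inj (hπ i)).1, fun i => ?_⟩
    have hmem : t' i ∈ {y | ∃ m : ℕ, y = t' i ^ (p ^ e) ^ m} := ⟨0, by simp⟩
    rwa [← (Prod.mk.inj (hπ i)).2] at hmem
  · rintro ⟨π, hπμ, hπt⟩
    refine ⟨π, fun i => ?_⟩
    obtain ⟨m₀, hm₀⟩ := hπt i
    rw [hm₀, setOf_eq_pow_pow_pow_eq_of_periodic (hμ (π i)) (ht (π i)), hπμ]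

/-- Concrete model of an `F`-stable maximal torus of `GL_n` of type `μ = (μ 0, …, μ (k-1))`:
`T_μ^F ≅ ∏_i GL_1(𝔽_{q^{μ i}})`, an element being a tuple `t` of units of `𝔽̄_q` with
`t i ∈ 𝔽_{q^{μ i}}`.  The subpartition `μ[t,a]` attached to a Frobenius orbit
`[a] = {a^{q^m}}` consists of the parts `μ i` with `t i ∈ [a]`; the data of all `μ[t,·]` is
the multiset of pairs `(μ i, Frobenius orbit of t i)`.  The `F`-fixed relative Weyl group
`W_{GL_n}(T_μ)^F ≅ C_{S_n}(w_μ)` acts by permuting factors of equal size and by Frobenius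
powers within each factor.  Claim: `μ[t,a] = μ[t',a]` for all `[a]` iff `t` and `t'` are
conjugate under `W_{GL_n}(T_μ)^F`. -/
theorem stmt13 (p e k : ℕ) [Fact p.Prime] (he : 0 < e)
    (μ : Fin k → ℕ) (hμ : ∀ i, 0 < μ i)
    (t t' : Fin k → (AlgebraicClosure (GaloisField p e))ˣ)
    (ht : ∀ i, t i ^ (p ^ e) ^ μ i = t i)
    (ht' : ∀ i, t' i ^ (p ^ e) ^ μ i = t' i) :
    ((Finset.univ.val.map fun i =>
        ((μ i, {y : (AlgebraicClosure (GaloisField p e))ˣ | ∃ m : ℕ, y = t i ^ (p ^ e) ^ m}) :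
          ℕ × Set (AlgebraicClosure (GaloisField p e))ˣ)) =
      (Finset.univ.val.map fun i =>
        ((μ i, {y : (AlgebraicClosure (GaloisField p e))ˣ | ∃ m : ℕ, y = t' i ^ (p ^ e) ^ m}) :
          ℕ × Set (AlgebraicClosure (GaloisField p e))ˣ)))
    ↔ ∃ π : Equiv.Perm (Fin k), (∀ i, μ (π i) = μ i) ∧
        ∀ i, ∃ m : ℕ, t' i = t (π i) ^ (p ^ e) ^ m :=
  stmt13_general p e k μ hμ t t' ht
end

section
/- Fix partitions μ' ⊆ μ of m ≤ n and n respectively, a semisimple element t in the F-stable maximal torus T_μ of GL_n of type μ, and the set D(μ,μ',t) of restrictions to T_{μ'} of W_{GL_n}(T_μ)^F-conjugates of t. Then there is a bijection between the W_{GL_m}(T_{μ'})^F-conjugacy classes in D(μ,μ',t) and the set P(μ,μ',t) of functions f from Frobenius-orbits [a] to partitions such that #[a] divides every part of f([a]), ⋃_{[a]} f([a]) = μ', and f([a]) ⊆ μ[t,a] for every [a]. -/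
/-!
The class of `t' ∈ D(μ,μ',t)` under `W_{GL_m}(T_{μ'})^F` is determined by its *type*, the multiset
of pairs (part `μ i`, Frobenius orbit of `t' i`). Two labellings of a finite set have the same
multiset of labels iff they differ by a permutation (match the fibres), and the multiset of one
labelling lies below that of another iff it embeds injectively into it; hence the types of elements
of `D` are exactly the sub-multisets of the type of `t` whose parts form `μ'`. The divisibility
condition is automatic: every element of `F̄_q` lies in a finite field, so it is a periodic point
of `x ↦ x ^ q`, and its orbit has the minimal period as size, which divides `μ i` since
`t i ^ q ^ μ i = t i`.
-/

open scoped Classical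

open Function Finset

namespace Multiset

variable {α α' ι β : Type*} [Fintype α] [Fintype α'] [Fintype ι]

theorem count_map_univ (u : α → β) (b : β) :
    (univ.val.map u).count b = Fintype.card {a // u a = b} := by
  rw [count_map, Fintype.card_subtype, Finset.card_def, Finset.filter_val]
  simp only [eq_comm]

theorem map_univ_eq_map_univ_iff {u : α → β} {v : α' → β} :
    univ.val.map u = univ.val.map v ↔ ∃ e : α ≃ α', ∀ a, v (e a) = u a := by
  constructor
  · intro h
    have hcard (b : β) : Fintype.card {a // u a = b} = Fintype.card {a // v a = b} := by
      rw [← count_map_univ, ← count_map_univ, h]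
    exact ⟨.ofFiberEquiv fun b => Fintype.equivOfCardEq (hcard b), Equiv.ofFiberEquiv_map _⟩
  · rintro ⟨e, he⟩
    rw [← map_univ_val_equiv e, map_map]
    exact map_congr rfl fun a _ => (he a).symm

theorem map_univ_le_map_univ_iff {w : α → β} {σ : ι → β} :
    univ.val.map w ≤ univ.val.map σ ↔ ∃ g : α → ι, Injective g ∧ ∀ a, σ (g a) = w a := by
  constructor
  · intro h
    have hemb (b : β) : Nonempty ({a // w a = b} ↪ {i // σ i = b}) :=
      Embedding.nonempty_of_card_le <| by
        rw [← count_map_univ, ← count_map_univ]; exact le_iff_count.1 h b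
    let g : α ↪ ι := (Equiv.sigmaFiberEquiv w).symm.toEmbedding.trans <|
      (Embedding.sigmaMap (.refl β) fun b => (hemb b).some).trans
        (Equiv.sigmaFiberEquiv σ).toEmbedding
    exact ⟨g, g.injective, fun a => ((hemb (w a)).some ⟨a, rfl⟩).2⟩
  · rintro ⟨g, hg, hσg⟩
    calc univ.val.map w = (univ.val.map g).map σ := by
          rw [map_map]; exact map_congr rfl fun a _ => (hσg a).symm
      _ ≤ univ.val.map σ :=
          map_le_map <| (le_iff_subset (univ.nodup.map hg)).2 fun i _ => mem_univ i

theorem exists_map_univ_eq_of_map_eq {γ : Type*} {ν : Multiset β} {f : β → γ} {u : α → γ}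
    (h : ν.map f = univ.val.map u) : ∃ v : α → β, univ.val.map v = ν ∧ ∀ a, f (v a) = u a := by
  rw [← map_univ_coe ν, map_map, map_univ_eq_map_univ_iff] at h
  obtain ⟨e, he⟩ := h
  refine ⟨fun a => e.symm a, ?_, fun a => ?_⟩
  · conv_rhs => rw [← map_univ_coe ν, ← map_univ_val_equiv e.symm, map_map]
    rfl
  · simpa using (he (e.symm a)).symm

end Multiset

theorem Quot.nonempty_equiv_subtype {α β : Type*} {r : α → α → Prop} {P : β → Prop} (f : α → β)
    (hr : ∀ a b, r a b ↔ f a = f b) (hP : ∀ y, P y ↔ ∃ a, f a = y) :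
    Nonempty (Quot r ≃ {y // P y}) := by
  let F : Quot r → {y // P y} :=
    Quot.lift (fun a => ⟨f a, (hP _).2 ⟨a, rfl⟩⟩) fun a b h => Subtype.ext ((hr a b).1 h)
  refine ⟨.ofBijective F ⟨?_, fun ⟨y, hy⟩ => ?_⟩⟩
  · rintro ⟨a⟩ ⟨b⟩ h
    exact Quot.sound ((hr a b).2 (congrArg Subtype.val h))
  · obtain ⟨a, rfl⟩ := (hP y).1 hy
    exact ⟨Quot.mk r a, rfl⟩

section OrbitType

variable {M : Type*} (R : M → M → Prop) {α ι : Type*} [Fintype α] [Fintype ι]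

def orbitType (w : α → ℕ) (s : α → M) : Multiset (ℕ × Quot R) :=
  univ.val.map fun a => (w a, Quot.mk R (s a))

variable {R}

theorem map_fst_orbitType (w : α → ℕ) (s : α → M) :
    (orbitType R w s).map Prod.fst = univ.val.map w :=
  Multiset.map_map _ _ _

theorem exists_orbitType_eq {w : α → ℕ} {ν : Multiset (ℕ × Quot R)}
    (h : ν.map Prod.fst = univ.val.map w) : ∃ s : α → M, orbitType R w s = ν := by
  obtain ⟨v, rfl, hv⟩ := Multiset.exists_map_univ_eq_of_map_eq h
  refine ⟨fun a => (v a).2.out, Multiset.map_congr rfl fun a _ => ?_⟩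
  rw [Quot.out_eq, ← hv a]

theorem orbitType_eq_orbitType_iff (hR : Equivalence R) {w : α → ℕ} {s s' : α → M} :
    orbitType R w s = orbitType R w s' ↔
      ∃ π : Equiv.Perm α, (∀ a, w (π a) = w a) ∧ ∀ a, R (s (π a)) (s' a) := by
  rw [orbitType, orbitType, eq_comm, Multiset.map_univ_eq_map_univ_iff]
  simp only [Prod.mk.injEq, hR.quot_mk_eq_iff, forall_and]

theorem orbitType_le_orbitType_iff (hR : Equivalence R) {w : α → ℕ} {s : α → M} {μ : ι → ℕ}
    {t : ι → M} : orbitType R w s ≤ orbitType R μ t ↔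
      ∃ g : α → ι, Injective g ∧ (∀ a, μ (g a) = w a) ∧ ∀ a, R (t (g a)) (s a) := by
  rw [orbitType, orbitType, Multiset.map_univ_le_map_univ_iff]
  simp only [Prod.mk.injEq, hR.quot_mk_eq_iff, forall_and]

end OrbitType

theorem Function.ncard_range_iterate {α : Type*} {f : α → α} {x : α} (hx : x ∈ periodicPts f) :
    (Set.range fun n => f^[n] x).ncard = minimalPeriod f x := by
  have hrange : Set.range (fun n => f^[n] x) = (fun n => f^[n] x) '' Set.Iio (minimalPeriod f x) :=
    Set.Subset.antisymm
      (Set.range_subset_iff.2 fun n => ⟨n % minimalPeriod f x,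
        Nat.mod_lt _ (minimalPeriod_pos_of_mem_periodicPts hx), iterate_mod_minimalPeriod_eq⟩)
      (Set.image_subset_range _ _)
  rw [hrange, iterate_injOn_Iio_minimalPeriod.ncard_image, ← Finset.coe_range,
    Set.ncard_coe_finset, Finset.card_range]

section PowOrbit

variable {M : Type*} [Monoid M] {q : ℕ}

theorem isPeriodicPt_pow_iff {n : ℕ} {a : M} : IsPeriodicPt (· ^ q) n a ↔ a ^ q ^ n = a := by
  rw [IsPeriodicPt, IsFixedPt, pow_iterate]

theorem equivalence_pow_pow (hper : ∀ a : M, ∃ n, 0 < n ∧ a ^ q ^ n = a) :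
    Equivalence fun a b : M => ∃ m, b = a ^ q ^ m where
  refl _ := ⟨0, by simp⟩
  symm := by
    rintro a _ ⟨m, rfl⟩
    obtain ⟨n, hn, ha⟩ := hper a
    refine ⟨n * m - m, ?_⟩
    rw [← pow_mul, ← pow_add, Nat.add_sub_cancel' (Nat.le_mul_of_pos_left m hn)]
    exact (isPeriodicPt_pow_iff.1 ((isPeriodicPt_pow_iff.2 ha).mul_const m)).symm
  trans := by
    rintro _ _ _ ⟨m, rfl⟩ ⟨m', rfl⟩
    exact ⟨m + m', by rw [← pow_mul, ← pow_add]⟩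

theorem ncard_setOf_pow_pow_dvd {a : M} {N : ℕ} (h : a ^ q ^ N = a) :
    {y | ∃ m, y = a ^ q ^ m}.ncard ∣ N := by
  rcases N.eq_zero_or_pos with rfl | hN
  · exact dvd_zero _
  have hper : IsPeriodicPt (· ^ q) N a := isPeriodicPt_pow_iff.2 h
  have horbit : {y | ∃ m, y = a ^ q ^ m} = Set.range fun m => (· ^ q)^[m] a := by
    ext; simp [pow_iterate, eq_comm]
  rw [horbit, ncard_range_iterate ⟨N, hN, hper⟩]
  exact hper.minimalPeriod_dvd

theorem ncard_dvd_of_mem_orbitType {ι : Type*} [Fintype ι] {μ : ι → ℕ} {t : ι → M}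
    (hper : ∀ a : M, ∃ n, 0 < n ∧ a ^ q ^ n = a) (ht : ∀ i, t i ^ q ^ μ i = t i) :
    ∀ pr ∈ orbitType (fun a b : M => ∃ m, b = a ^ q ^ m) μ t, ∀ a, Quot.mk _ a = pr.2 →
      {y | ∃ m, y = a ^ q ^ m}.ncard ∣ pr.1 := by
  intro pr hpr a ha
  obtain ⟨i, -, rfl⟩ := Multiset.mem_map.1 hpr
  have hR := equivalence_pow_pow hper
  have hai := (hR.quot_mk_eq_iff _ _).1 ha
  have horbit : {y | ∃ m, y = a ^ q ^ m} = {y | ∃ m, y = t i ^ q ^ m} :=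
    Set.ext fun y => ⟨hR.trans (hR.symm hai), hR.trans hai⟩
  rw [horbit]
  exact ncard_setOf_pow_pow_dvd (ht i)

end PowOrbit

theorem exists_pow_pow_pow_eq_self (F : Type*) {K : Type*} [Field F] [Finite F] [Field K]
    [Algebra F K] [Algebra.IsAlgebraic F K] (p : ℕ) [CharP F p] (e : ℕ) (x : K) :
    ∃ n, 0 < n ∧ x ^ (p ^ e) ^ n = x := by
  let L := IntermediateField.adjoin F {x}
  have : FiniteDimensional F L :=
    IntermediateField.adjoin.finiteDimensional (Algebra.IsIntegral.isIntegral x)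
  have : Finite L := Module.finite_of_finite F
  have : Fintype L := Fintype.ofFinite L
  have : CharP L p := charP_of_injective_algebraMap (algebraMap F L).injective p
  obtain ⟨n, -, hcard⟩ := FiniteField.card L p
  have hx : x ^ p ^ (n : ℕ) = x := by
    simpa [← hcard] using congrArg Subtype.val
      (FiniteField.pow_card (⟨x, IntermediateField.mem_adjoin_simple_self F x⟩ : L))
  refine ⟨n, n.pos, ?_⟩
  rw [← pow_mul, mul_comm, pow_mul, ← isPeriodicPt_pow_iff]
  exact IsFixedPt.iterate hx e

theorem stmt14_general (p e k : ℕ) [Fact p.Prime]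
    (μ : Fin k → ℕ)
    (A : Finset (Fin k))
    (t : Fin k → (AlgebraicClosure (GaloisField p e))ˣ)
    (ht : ∀ i, t i ^ (p ^ e) ^ μ i = t i)
    (relK : (AlgebraicClosure (GaloisField p e))ˣ → (AlgebraicClosure (GaloisField p e))ˣ → Prop)
    (hrelK : relK = fun a b => ∃ m : ℕ, b = a ^ (p ^ e) ^ m)
    (D : Set ((i : A) → (AlgebraicClosure (GaloisField p e))ˣ))
    (hD : D = {t' | ∃ g : A → Fin k, Function.Injective g ∧ (∀ i, μ (g i) = μ i.1) ∧
        ∀ i, ∃ m : ℕ, t' i = t (g i) ^ (p ^ e) ^ m})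
    (r : D → D → Prop)
    (hr : r = fun t' t'' => ∃ π : Equiv.Perm A, (∀ i : A, μ (π i).1 = μ i.1) ∧
        ∀ i, ∃ m : ℕ, (t''.1) i = (t'.1) (π i) ^ (p ^ e) ^ m) :
    Nonempty (Quot r ≃
      {ν : Multiset (ℕ × Quot relK) //
        ν ≤ Finset.univ.val.map (fun i => ((μ i, Quot.mk relK (t i)) : ℕ × Quot relK)) ∧
        ν.map Prod.fst = A.val.map μ ∧
        ∀ pr ∈ ν, ∀ a : (AlgebraicClosure (GaloisField p e))ˣ, Quot.mk relK a = pr.2 →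
          Set.ncard {y : (AlgebraicClosure (GaloisField p e))ˣ |
              ∃ m : ℕ, y = a ^ (p ^ e) ^ m} ∣ pr.1}) := by
  subst hrelK hD hr
  have hper (a : (AlgebraicClosure (GaloisField p e))ˣ) : ∃ n, 0 < n ∧ a ^ (p ^ e) ^ n = a := by
    obtain ⟨n, hn, ha⟩ := exists_pow_pow_pow_eq_self (GaloisField p e) p e a.val
    exact ⟨n, hn, Units.ext (by simpa using ha)⟩
  have hR := equivalence_pow_pow hper
  have hA : A.val.map μ = univ.val.map fun i : A => μ i := by
    rw [Finset.univ_eq_attach, Finset.attach_val]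
    exact (Multiset.attach_map_val' _ _).symm
  refine Quot.nonempty_equiv_subtype (fun t' => orbitType _ (fun i : A => μ i) t'.1)
    (fun t' t'' => by rw [orbitType_eq_orbitType_iff hR]) fun ν => ?_
  rw [hA]
  constructor
  · rintro ⟨hle, hfst, -⟩
    obtain ⟨s, rfl⟩ := exists_orbitType_eq hfst
    exact ⟨⟨s, (orbitType_le_orbitType_iff hR).1 hle⟩, rfl⟩
  · rintro ⟨⟨s, hs⟩, rfl⟩
    have hle := (orbitType_le_orbitType_iff hR).2 hs
    exact ⟨hle, map_fst_orbitType _ _,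
      fun pr hpr => ncard_dvd_of_mem_orbitType hper ht pr (Multiset.mem_of_le hle hpr)⟩

/-- Concrete model (cf. `stmt13`) of Lemma 3.1/3.2 of the paper: fix a torus `T_μ` of `GL_n`
of type `μ`, a subset `A` of indices singling out the subtorus `T_{μ'}` (so `μ' = μ|_A` with
`μ = μ' ∪ μ''`), and a semisimple `t ∈ T_μ^F`.  Let `D(μ,μ',t)` be the set of restrictions to
`T_{μ'}` of `W_{GL_n}(T_μ)^F`-conjugates of `t`, and let `r` be the conjugacy relation on `D`
under `W_{GL_{|μ'|}}(T_{μ'})^F`.  Let `P(μ,μ',t)` be the set of assignments of partitions to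
Frobenius orbits `[a]` — encoded as sub-multisets `ν` of the multiset of pairs
`(μ i, [t i])` — with `#[a]` dividing every part assigned to `[a]`, union of the values equal
to `μ'`, and value at `[a]` contained in `μ[t,a]`.  Then the `W_{GL_{|μ'|}}(T_{μ'})^F`-classes
in `D(μ,μ',t)` are in bijection with `P(μ,μ',t)`. -/
theorem stmt14 (p e k : ℕ) [Fact p.Prime] (he : 0 < e)
    (μ : Fin k → ℕ) (hμ : ∀ i, 0 < μ i)
    (A : Finset (Fin k))
    (t : Fin k → (AlgebraicClosure (GaloisField p e))ˣ)
    (ht : ∀ i, t i ^ (p ^ e) ^ μ i = t i)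
    (relK : (AlgebraicClosure (GaloisField p e))ˣ → (AlgebraicClosure (GaloisField p e))ˣ → Prop)
    (hrelK : relK = fun a b => ∃ m : ℕ, b = a ^ (p ^ e) ^ m)
    (D : Set ((i : A) → (AlgebraicClosure (GaloisField p e))ˣ))
    (hD : D = {t' | ∃ g : A → Fin k, Function.Injective g ∧ (∀ i, μ (g i) = μ i.1) ∧
        ∀ i, ∃ m : ℕ, t' i = t (g i) ^ (p ^ e) ^ m})
    (r : D → D → Prop)
    (hr : r = fun t' t'' => ∃ π : Equiv.Perm A, (∀ i : A, μ (π i).1 = μ i.1) ∧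
        ∀ i, ∃ m : ℕ, (t''.1) i = (t'.1) (π i) ^ (p ^ e) ^ m) :
    Nonempty (Quot r ≃
      {ν : Multiset (ℕ × Quot relK) //
        ν ≤ Finset.univ.val.map (fun i => ((μ i, Quot.mk relK (t i)) : ℕ × Quot relK)) ∧
        ν.map Prod.fst = A.val.map μ ∧
        ∀ pr ∈ ν, ∀ a : (AlgebraicClosure (GaloisField p e))ˣ, Quot.mk relK a = pr.2 →
          Set.ncard {y : (AlgebraicClosure (GaloisField p e))ˣ |
              ∃ m : ℕ, y = a ^ (p ^ e) ^ m} ∣ pr.1}) :=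
  stmt14_general p e k μ A t ht relK hrelK D hD r hr
end

section
/- With notation as in the torus analysis for GL_n: fix μ = μ' ∪ μ'', t ∈ T_μ^F semisimple and t' ∈ T_{μ'}^F. Let M(μ,μ',t,t') = {w ∈ W_{GL_n}(T_μ)^F : (ʷt)|_{T_{μ'}} = t'}. Then #M(μ,μ',t,t') = |W_{GL_m}(T_{μ'}, t')^F| · |W_{GL_{n-m}}(T_{μ''})^F| · ∏_{[a]} C_{μ[t,a], μ'[t',a]} if t' ∈ D(μ,μ',t), and #M(μ,μ',t,t') = 0 otherwise, where W_G(T,t) = {w ∈ W_G(T) : ʷt = t}. -/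
/-!
Write `q = p ^ e`. Once the permutation `π` of `w = (π, m)` is fixed, the exponents `m i` can
be chosen independently, and at `b ∈ A` the number of admissible `m b < μ b` is the number of
`n < μ b` with `t (π⁻¹ b) ^ q ^ n = t' b`. Since `n ↦ x ^ q ^ n` is periodic, this number is `0`
unless `t (π⁻¹ b)` and `t' b` lie in one Frobenius orbit, and otherwise it only depends on
`t' b`. The same holds for `Stab` and `Wc`, so everything reduces to counting permutations that
match the Frobenius classes `(μ i, [t i])`.

Such a permutation `π` is the same as the set `s = π⁻¹ A`, which must carry the same multiset
of classes as `t'`, together with a class-preserving bijection `s ≃ A` and a `μ`-preserving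
bijection `sᶜ ≃ Aᶜ`. Once one of each is fixed, these bijections are torsors under the
class-stabilizer of `t'` and the `μ`-stabilizer on `Aᶜ`. Finally, the admissible sets `s` are
chosen independently in each class fibre, which gives the product of binomial coefficients.
-/

open scoped Classical

open Finset Equiv

section Fibers

variable {α β C : Type*}

theorem exists_equiv_comp_eq_iff [Finite α] [Finite β] (f : α → C) (g : β → C) :
    (∃ e : α ≃ β, ∀ a, g (e a) = f a) ↔
      ∀ c, Nat.card {a // f a = c} = Nat.card {b // g b = c} := by
  constructor
  · rintro ⟨e, he⟩ c
    exact Nat.card_congr (e.subtypeEquiv fun a => by rw [he])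
  · intro h
    exact ⟨ofFiberEquiv fun c => (Finite.card_eq.1 (h c)).some, ofFiberEquiv_map _⟩

theorem natCard_equiv_comp_eq (f : α → C) (g : β → C) (e₀ : α ≃ β) (h₀ : ∀ a, g (e₀ a) = f a) :
    Nat.card {e : α ≃ β // ∀ a, g (e a) = f a} =
      Nat.card {σ : Perm β // ∀ b, g (σ b) = g b} :=
  Nat.card_congr
    { toFun e := ⟨e₀.symm.trans e, fun b => by simp [e.2, ← h₀]⟩
      invFun σ := ⟨e₀.trans σ, fun a => by simp [σ.2, h₀]⟩
      left_inv e := by ext; simp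
      right_inv σ := by ext; simp }

theorem count_map_val [DecidableEq C] (s : Finset α) (f : α → C) (c : C) :
    (s.val.map f).count c = #{x ∈ s | f x = c} := by
  rw [Multiset.count_map]
  simp [card_def, filter_val, eq_comm]

theorem natCard_subtype_fiber [DecidableEq C] (s : Finset α) (f : α → C) (c : C) :
    Nat.card {x : s // f x = c} = (s.val.map f).count c := by
  rw [count_map_val, ← Nat.subtype_card _ fun x => mem_filter]
  exact Nat.card_congr (subtypeSubtypeEquivSubtypeInter (· ∈ s) (fun x => f x = c))

theorem natCard_fiber [Fintype α] [DecidableEq C] (f : α → C) (c : C) :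
    Nat.card {x // f x = c} = ((univ : Finset α).val.map f).count c := by
  rw [count_map_val]
  exact Nat.subtype_card _ fun x => by simp

theorem exists_equiv_iff_map_val_eq [Fintype β] [DecidableEq C] (s : Finset α) (f : α → C)
    (g : β → C) :
    (∃ e : s ≃ β, ∀ x, g (e x) = f x) ↔ s.val.map f = (univ : Finset β).val.map g := by
  rw [exists_equiv_comp_eq_iff, Multiset.ext]
  simp only [natCard_subtype_fiber s f, natCard_fiber g]

theorem natCard_subtype_fiber_add_compl [Fintype α] [DecidableEq α] [DecidableEq C]
    (s : Finset α) (f : α → C) (c : C) :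
    Nat.card {x : s // f x = c} + Nat.card {x : ↥sᶜ // f x = c} = Nat.card {x // f x = c} := by
  rw [natCard_subtype_fiber, natCard_subtype_fiber, natCard_fiber, count_map_val, count_map_val,
    count_map_val, ← card_union_of_disjoint (disjoint_filter_filter disjoint_compl_right),
    ← filter_union, union_compl]

end Fibers

section Subsets

variable {ι C : Type*} [Fintype ι] [DecidableEq ι] (f : ι → C)

theorem filter_eq_of_forall_subset_fiber [DecidableEq C] {T : Finset C} (hT : ∀ i, f i ∈ T)
    {φ : T → Finset ι} (hφ : ∀ c, φ c ⊆ ({i | f i = c} : Finset ι)) (c : T) :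
    {i ∈ ({i | i ∈ φ ⟨f i, hT i⟩} : Finset ι) | f i = c} = φ c := by
  ext i
  simp only [mem_filter, mem_univ, true_and]
  obtain ⟨c, hc⟩ := c
  constructor
  · rintro ⟨hi, rfl⟩
    exact hi
  · intro hi
    obtain rfl : f i = c := (mem_filter.1 (hφ _ hi)).2
    exact ⟨hi, rfl⟩

theorem card_filter_map_val_eq_prod_choose [DecidableEq C] (N : Multiset C)
    (hN : ∀ c ∈ N, ∃ i, f i = c) :
    #{s : Finset ι | s.val.map f = N} =
      ∏ c ∈ ((univ : Finset ι).val.map f).toFinset,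
        (((univ : Finset ι).val.map f).count c).choose (N.count c) := by
  set T := ((univ : Finset ι).val.map f).toFinset
  have hT (i : ι) : f i ∈ T := by simp [T]
  have hfiber {φ : T → Finset ι}
      (hφ : φ ∈ Fintype.piFinset fun c : T => powersetCard (N.count c.1) {i | f i = c}) (c : T) :
      φ c ⊆ ({i | f i = c} : Finset ι) ∧ #(φ c) = N.count c.1 :=
    mem_powersetCard.1 (Fintype.mem_piFinset.1 hφ c)
  calc #{s : Finset ι | s.val.map f = N}
      = #(Fintype.piFinset fun c : T => powersetCard (N.count c.1) {i | f i = c}) := by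
        refine card_nbij' (fun s c => {i ∈ s | f i = c})
          (fun φ => ({i | i ∈ φ ⟨f i, hT i⟩} : Finset ι)) ?_ ?_ ?_ ?_
        · intro s hs
          simp only [coe_filter, mem_univ, true_and, Set.mem_ofPred_eq] at hs
          simp only [Fintype.coe_piFinset, Set.mem_pi, Set.mem_univ, mem_coe, mem_powersetCard,
            forall_const]
          exact fun c => ⟨filter_subset_filter _ (subset_univ s), by rw [← count_map_val, hs]⟩
        · intro φ hφ
          simp only [coe_filter, mem_univ, true_and, Set.mem_ofPred_eq]
          ext c
          rw [count_map_val]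
          by_cases hc : c ∈ T
          · rw [filter_eq_of_forall_subset_fiber f hT (fun c => (hfiber hφ c).1) ⟨c, hc⟩]
            exact (hfiber hφ ⟨c, hc⟩).2
          · rw [filter_false_of_mem fun i _ (hi : f i = c) => hc (hi ▸ hT i), card_empty, eq_comm,
              Multiset.count_eq_zero]
            intro hcN
            obtain ⟨i, rfl⟩ := hN c hcN
            exact hc (hT i)
        · intro s _
          ext i
          simp
        · intro φ hφ
          funext c
          exact filter_eq_of_forall_subset_fiber f hT (fun c => (hfiber hφ c).1) c
    _ = _ := by
        rw [Fintype.card_piFinset, ← prod_coe_sort T]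
        simp only [card_powersetCard, count_map_val]

end Subsets

section Perm

variable {ι : Type*} [Fintype ι] [DecidableEq ι]

def permMapsToEquiv (s A : Finset ι) :
    {π : Perm ι // ∀ x, π x ∈ A ↔ x ∈ s} ≃ (s ≃ A) × (↥sᶜ ≃ ↥Aᶜ) where
  toFun π := (π.1.subtypeEquiv fun x => (π.2 x).symm, π.1.subtypeEquiv fun x => by simp [π.2 x])
  invFun e := ⟨subtypeCongr e.1
      ((subtypeEquivRight fun _ => mem_compl.symm).trans
        (e.2.trans (subtypeEquivRight fun _ => mem_compl))), fun x => by
    by_cases hx : x ∈ s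
    · simp [subtypeCongr, hx, sumCompl_symm_apply_of_pos]
    · simpa [subtypeCongr, hx, sumCompl_symm_apply_of_neg] using mem_compl.1 (e.2 _).2⟩
  left_inv π := by
    ext x
    by_cases hx : x ∈ s <;>
      simp [subtypeCongr, hx, sumCompl_symm_apply_of_pos, sumCompl_symm_apply_of_neg]
  right_inv e := by
    ext x
    · simp [subtypeCongr, x.2, sumCompl_symm_apply_of_pos]
    · simp [subtypeCongr, mem_compl.1 x.2, sumCompl_symm_apply_of_neg]
      rfl

@[simp]
theorem permMapsToEquiv_fst_apply (s A : Finset ι) (π : {π : Perm ι // ∀ x, π x ∈ A ↔ x ∈ s})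
    (x : s) :
    (permMapsToEquiv s A π).1 x = ⟨π.1 x, (π.2 x).2 x.2⟩ :=
  rfl

@[simp]
theorem permMapsToEquiv_snd_apply (s A : Finset ι) (π : {π : Perm ι // ∀ x, π x ∈ A ↔ x ∈ s})
    (x : ↥sᶜ) :
    ((permMapsToEquiv s A π).2 x : ι) = π.1 x :=
  rfl

variable {D : Type*} (A : Finset ι) (μ : ι → ℕ) (d : ι → D) (d' : A → D)

theorem natCard_perm_mapsTo (s : Finset ι) :
    Nat.card {π : Perm ι // (∀ x, π x ∈ A ↔ x ∈ s) ∧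
        (∀ i, μ (π i) = μ i) ∧ ∀ b : A, d (π⁻¹ b) = d' b} =
      Nat.card {e : s ≃ A // ∀ x, (μ (e x), d' (e x)) = (μ x, d x)} *
        Nat.card {e : ↥sᶜ ≃ ↥Aᶜ // ∀ x, μ (e x) = μ x} := by
  rw [← Nat.card_prod]
  refine Nat.card_congr <| (subtypeSubtypeEquivSubtypeInter _ _).symm.trans <|
    ((permMapsToEquiv s A).subtypeEquiv fun π => ?_).trans subtypeProdEquivProd
  obtain ⟨π, hπ⟩ := π
  simp only [permMapsToEquiv_fst_apply, permMapsToEquiv_snd_apply, Prod.mk.injEq, Subtype.forall,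
    mem_compl]
  constructor
  · rintro ⟨hμ, hd⟩
    refine ⟨fun x hx => ⟨hμ x, ?_⟩, fun x _ => hμ x⟩
    simpa using (hd (π x) ((hπ x).2 hx)).symm
  · rintro ⟨h₁, h₂⟩
    refine ⟨fun x => ?_, fun b hb => ?_⟩
    · by_cases hx : x ∈ s
      · exact (h₁ x hx).1
      · exact h₂ x hx
    · have hs : π⁻¹ b ∈ s := (hπ _).1 (by simpa using hb)
      simpa using ((h₁ _ hs).2).symm

theorem natCard_perm_mapsTo_eq_ite [DecidableEq D] (s : Finset ι) :
    Nat.card {π : Perm ι // (∀ x, π x ∈ A ↔ x ∈ s) ∧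
        (∀ i, μ (π i) = μ i) ∧ ∀ b : A, d (π⁻¹ b) = d' b} =
      if s.val.map (fun i => (μ i, d i)) = (univ : Finset A).val.map (fun b : A => (μ b, d' b))
      then Nat.card {σ : Perm A // ∀ b, (μ (σ b), d' (σ b)) = (μ b, d' b)} *
        Nat.card {ρ : Perm ↥Aᶜ // ∀ x, μ (ρ x) = μ x}
      else 0 := by
  rw [natCard_perm_mapsTo]
  split_ifs with hs
  · obtain ⟨e₁, he₁⟩ := (exists_equiv_iff_map_val_eq _ _ _).2 hs
    have hcompl (n : ℕ) : Nat.card {x : ↥sᶜ // μ x = n} = Nat.card {x : ↥Aᶜ // μ x = n} := by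
      have hsA := (exists_equiv_comp_eq_iff (fun x : s => μ x) (fun b : A => μ b)).1
        ⟨e₁, fun x => congrArg Prod.fst (he₁ x)⟩ n
      have hs := natCard_subtype_fiber_add_compl s μ n
      have hA := natCard_subtype_fiber_add_compl A μ n
      omega
    obtain ⟨e₂, he₂⟩ := (exists_equiv_comp_eq_iff _ _).2 hcompl
    rw [natCard_equiv_comp_eq (fun x : s => (μ x, d x)) (fun b : A => (μ b, d' b)) e₁ he₁,
      natCard_equiv_comp_eq (fun x : ↥sᶜ => μ x) (fun x : ↥Aᶜ => μ x) e₂ he₂]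
  · rw [Nat.card_eq_zero.2 (Or.inl ⟨fun e => hs ?_⟩), zero_mul]
    exact (exists_equiv_iff_map_val_eq _ _ _).1 ⟨e.1, e.2⟩

theorem natCard_perm_match_eq [DecidableEq D] :
    Nat.card {π : Perm ι // (∀ i, μ (π i) = μ i) ∧ ∀ b : A, d (π⁻¹ b) = d' b} =
      #{s : Finset ι | s.val.map (fun i => (μ i, d i)) =
          (univ : Finset A).val.map (fun b : A => (μ b, d' b))} *
        (Nat.card {σ : Perm A // ∀ b, (μ (σ b), d' (σ b)) = (μ b, d' b)} *
          Nat.card {ρ : Perm ↥Aᶜ // ∀ x, μ (ρ x) = μ x}) := by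
  let preimage (π : Perm ι) : Finset ι := {x | π x ∈ A}
  have hfiber (s : Finset ι) :
      Nat.card {π : {π : Perm ι // (∀ i, μ (π i) = μ i) ∧ ∀ b : A, d (π⁻¹ b) = d' b} //
        preimage π = s} =
      Nat.card {π : Perm ι // (∀ x, π x ∈ A ↔ x ∈ s) ∧
        (∀ i, μ (π i) = μ i) ∧ ∀ b : A, d (π⁻¹ b) = d' b} := by
    refine Nat.card_congr <| (subtypeSubtypeEquivSubtypeInter _ (fun π => preimage π = s)).trans
      (subtypeEquivRight fun π => ?_)
    simp [preimage, Finset.ext_iff, and_comm]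
  rw [← Nat.card_congr (sigmaFiberEquiv fun π :
      {π : Perm ι // (∀ i, μ (π i) = μ i) ∧ ∀ b : A, d (π⁻¹ b) = d' b} => preimage π),
    Nat.card_sigma,
    sum_congr rfl fun s _ => (hfiber s).trans (natCard_perm_mapsTo_eq_ite A μ d d' s), sum_ite,
    sum_const_zero, add_zero, sum_const, smul_eq_mul]

end Perm

theorem natCard_pairs_eq_card_mul_prod {α ι : Type*} [Fintype α] [Fintype ι] [DecidableEq ι]
    (W : Set (α × (ι → ℕ))) (P : α → Prop) (ν : ι → ℕ) (Q : α → ι → ℕ → Prop)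
    (hW : ∀ w, w ∈ W ↔ P w.1 ∧ (∀ i, w.2 i < ν i) ∧ ∀ i, Q w.1 i (w.2 i))
    (C : α → ι → Prop) (g : ι → ℕ)
    (hQ : ∀ a, P a → ∀ i, #{n ∈ range (ν i) | Q a i n} = if C a i then g i else 0) :
    Nat.card W = #{a | P a ∧ ∀ i, C a i} * ∏ i, g i := by
  have hfiber (a : α) :
      Nat.card {f : ι → ℕ // P a ∧ (∀ i, f i < ν i) ∧ ∀ i, Q a i (f i)} =
        if P a ∧ ∀ i, C a i then ∏ i, g i else 0 := by
    by_cases ha : P a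
    · rw [Nat.subtype_card (Fintype.piFinset fun i => {n ∈ range (ν i) | Q a i n})
        fun f => by simp [ha, forall_and], Fintype.card_piFinset,
        prod_congr rfl fun i _ => hQ a ha i, Fintype.prod_ite_zero]
      simp [ha]
    · simp [ha]
  have (a : α) : Finite {f : ι → ℕ // P a ∧ (∀ i, f i < ν i) ∧ ∀ i, Q a i (f i)} :=
    Set.Finite.to_subtype <| (Fintype.piFinset fun i => range (ν i)).finite_toSet.subset
      fun f hf => by simpa using hf.2.1
  calc Nat.card W
      = Nat.card (Σ a, {f : ι → ℕ // P a ∧ (∀ i, f i < ν i) ∧ ∀ i, Q a i (f i)}) :=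
        Nat.card_congr <| (subtypeEquivRight hW).trans <|
          subtypeProdEquivSigmaSubtype fun a (f : ι → ℕ) =>
            P a ∧ (∀ i, f i < ν i) ∧ ∀ i, Q a i (f i)
    _ = _ := by
        rw [Nat.card_sigma, sum_congr rfl fun a _ => hfiber a, sum_ite, sum_const_zero, add_zero,
          sum_const, smul_eq_mul]

section Frobenius

variable {K : Type*} [Monoid K] (q : ℕ)

noncomputable def frobCount (ν : ℕ) (x y : K) : ℕ := #{n ∈ range ν | x ^ q ^ n = y}

theorem pow_pow_pow_add (x : K) (a b : ℕ) : (x ^ q ^ a) ^ q ^ b = x ^ q ^ (a + b) := by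
  rw [← pow_mul, ← pow_add]

theorem frobCount_pow_left {ν : ℕ} {x : K} (hx : x ^ q ^ ν = x) (o : ℕ) (y : K) :
    frobCount q ν (x ^ q ^ o) y = frobCount q ν x y := by
  have hper : Function.Periodic (fun n => x ^ q ^ n = y) ν := fun n => by
    simp only [add_comm n, ← pow_pow_pow_add, hx]
  calc frobCount q ν (x ^ q ^ o) y = #{n ∈ Ico o (o + ν) | x ^ q ^ n = y} := by
        have hIco : Ico o (o + ν) = (range ν).map (addLeftEmbedding o) := by
          rw [range_eq_Ico, map_add_left_Ico, add_zero]
        rw [hIco, filter_map, card_map]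
        simp [frobCount, pow_pow_pow_add]
    _ = ν.count (fun n => x ^ q ^ n = y) := Nat.filter_Ico_card_eq_of_periodic _ _ _ hper
    _ = frobCount q ν x y := Nat.count_eq_card_filter_range _ _

theorem exists_pow_eq_pow_of_eqvGen {x y : K}
    (h : Relation.EqvGen (fun a b => ∃ m : ℕ, b = a ^ q ^ m) x y) :
    ∃ a b : ℕ, x ^ q ^ a = y ^ q ^ b := by
  induction h with
  | rel x y hxy =>
    obtain ⟨m, rfl⟩ := hxy
    exact ⟨m, 0, by simp⟩
  | refl x => exact ⟨0, 0, rfl⟩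
  | symm x y _ ih =>
    obtain ⟨a, b, hab⟩ := ih
    exact ⟨b, a, hab.symm⟩
  | trans x y z _ _ ih₁ ih₂ =>
    obtain ⟨a, b, hab⟩ := ih₁
    obtain ⟨c, d, hcd⟩ := ih₂
    refine ⟨a + c, d + b, ?_⟩
    rw [← pow_pow_pow_add, hab, pow_pow_pow_add, add_comm b, ← pow_pow_pow_add, hcd,
      pow_pow_pow_add]

theorem exists_eq_pow_of_quot_eq (R : K → K → Prop) (hR : R = fun a b => ∃ m : ℕ, b = a ^ q ^ m)
    {ν : ℕ} (hν : 0 < ν) {x y : K} (hy : y ^ q ^ ν = y) (h : Quot.mk R x = Quot.mk R y) :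
    ∃ m : ℕ, y = x ^ q ^ m := by
  subst hR
  obtain ⟨a, b, hab⟩ := exists_pow_eq_pow_of_eqvGen q (Quot.eq.1 h)
  have hper : Function.IsPeriodicPt (· ^ q) ν y := by
    simpa [Function.IsPeriodicPt, Function.IsFixedPt, pow_iterate] using hy
  -- `b + (ν * b - b) = ν * b` is a period of `y`
  have hyb : y ^ q ^ (b + (ν * b - b)) = y := by
    rw [Nat.add_sub_cancel' (Nat.le_mul_of_pos_left b hν)]
    simpa [pow_iterate] using (hper.mul_const b).eq
  refine ⟨a + (ν * b - b), ?_⟩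
  rw [← pow_pow_pow_add, hab, pow_pow_pow_add, hyb]

theorem frobCount_eq_ite (R : K → K → Prop) (hR : R = fun a b => ∃ m : ℕ, b = a ^ q ^ m)
    {ν : ℕ} (hν : 0 < ν) {x y : K} (hx : x ^ q ^ ν = x) (hy : y ^ q ^ ν = y) :
    frobCount q ν x y = if Quot.mk R x = Quot.mk R y then frobCount q ν y y else 0 := by
  split_ifs with h
  · obtain ⟨m, rfl⟩ := exists_eq_pow_of_quot_eq q R hR hν hy h
    exact (frobCount_pow_left q hx m _).symm
  · rw [frobCount, card_eq_zero, filter_eq_empty_iff]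
    exact fun n _ hn => h (Quot.sound (hR ▸ ⟨n, hn.symm⟩))

variable {ι : Type*} [Fintype ι] [DecidableEq ι]

theorem natCard_relWeyl_eq (ν : ι → ℕ) :
    Nat.card {w : Perm ι × (ι → ℕ) | (∀ i, ν (w.1 i) = ν i) ∧ ∀ i, w.2 i < ν i} =
      Nat.card {σ : Perm ι // ∀ i, ν (σ i) = ν i} * ∏ i, ν i := by
  rw [natCard_pairs_eq_card_mul_prod _ (fun σ => ∀ i, ν (σ i) = ν i) ν (fun _ _ _ => True)
      (by simp) (fun _ _ => True) ν (by simp)]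
  congr 1
  exact (Nat.subtype_card _ fun σ => by simp).symm

theorem natCard_stabilizer_eq (R : K → K → Prop) (hR : R = fun a b => ∃ m : ℕ, b = a ^ q ^ m)
    (ν : ι → ℕ) (hν : ∀ i, 0 < ν i) (u : ι → K) (hu : ∀ i, u i ^ q ^ ν i = u i) :
    Nat.card {w : Perm ι × (ι → ℕ) | (∀ i, ν (w.1 i) = ν i) ∧ (∀ i, w.2 i < ν i) ∧
        ∀ i, u (w.1⁻¹ i) ^ q ^ (w.2 i) = u i} =
      Nat.card {σ : Perm ι // ∀ i, (ν (σ i), Quot.mk R (u (σ i))) = (ν i, Quot.mk R (u i))} *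
        ∏ i, frobCount q (ν i) (u i) (u i) := by
  rw [natCard_pairs_eq_card_mul_prod _ (fun σ => ∀ i, ν (σ i) = ν i) ν
      (fun σ i n => u (σ⁻¹ i) ^ q ^ n = u i) (fun _ => by rfl)
      (fun σ i => Quot.mk R (u (σ⁻¹ i)) = Quot.mk R (u i)) _ fun σ hσ i => ?_]
  · congr 1
    refine (Nat.subtype_card _ fun σ => ?_).symm
    simp only [mem_filter, mem_univ, true_and, Prod.mk.injEq, forall_and]
    refine and_congr_right fun _ => ⟨fun h i => ?_, fun h i => ?_⟩
    · simpa using (h (σ i)).symm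
    · simpa using (h (σ⁻¹ i)).symm
  · have hσi : ν (σ⁻¹ i) = ν i := by simpa using (hσ (σ⁻¹ i)).symm
    exact frobCount_eq_ite q R hR (hν i) (hσi ▸ hu _) (hu i)

theorem natCard_transporter_eq (R : K → K → Prop) (hR : R = fun a b => ∃ m : ℕ, b = a ^ q ^ m)
    (A : Finset ι) (μ : ι → ℕ) (hμ : ∀ i, 0 < μ i) (t : ι → K) (ht : ∀ i, t i ^ q ^ μ i = t i)
    (t' : A → K) (ht' : ∀ b : A, t' b ^ q ^ μ b = t' b) :
    Nat.card {w : Perm ι × (ι → ℕ) | (∀ i, μ (w.1 i) = μ i) ∧ (∀ i, w.2 i < μ i) ∧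
        ∀ i : A, t (w.1⁻¹ i.1) ^ q ^ (w.2 i.1) = t' i} =
      Nat.card {π : Perm ι // (∀ i, μ (π i) = μ i) ∧
          ∀ b : A, Quot.mk R (t (π⁻¹ b)) = Quot.mk R (t' b)} *
        ((∏ b : A, frobCount q (μ b) (t' b) (t' b)) * ∏ x : ↥Aᶜ, μ x) := by
  rw [natCard_pairs_eq_card_mul_prod _ (fun π => ∀ i, μ (π i) = μ i) μ
      (fun π i n => ∀ h : i ∈ A, t (π⁻¹ i) ^ q ^ n = t' ⟨i, h⟩) (fun w => by simp)
      (fun π i => ∀ h : i ∈ A, Quot.mk R (t (π⁻¹ i)) = Quot.mk R (t' ⟨i, h⟩))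
      (fun i => if h : i ∈ A then frobCount q (μ i) (t' ⟨i, h⟩) (t' ⟨i, h⟩) else μ i)
      fun π hπ i => ?_]
  · rw [Fintype.prod_dite]
    congr 1
    · exact (Nat.subtype_card _ fun π => by simp).symm
    · congr 1
      · congr!
      · exact Fintype.prod_equiv (subtypeEquivRight fun x => (mem_compl : x ∈ Aᶜ ↔ x ∉ A).symm)
          _ _ fun _ => rfl
  · by_cases h : i ∈ A
    · have hπi : μ (π⁻¹ i) = μ i := by simpa using (hπ (π⁻¹ i)).symm
      simpa [h, frobCount] using frobCount_eq_ite q R hR (hμ i) (hπi ▸ ht _) (ht' ⟨i, h⟩)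
    · simp [h]

end Frobenius

theorem stmt15_general (p e k : ℕ) [Fact p.Prime]
    (μ : Fin k → ℕ) (hμ : ∀ i, 0 < μ i)
    (A : Finset (Fin k))
    (t : Fin k → (AlgebraicClosure (GaloisField p e))ˣ)
    (ht : ∀ i, t i ^ (p ^ e) ^ μ i = t i)
    (t' : (i : A) → (AlgebraicClosure (GaloisField p e))ˣ)
    (ht' : ∀ i : A, t' i ^ (p ^ e) ^ μ i.1 = t' i)
    (relK : (AlgebraicClosure (GaloisField p e))ˣ → (AlgebraicClosure (GaloisField p e))ˣ → Prop)
    (hrelK : relK = fun a b => ∃ m : ℕ, b = a ^ (p ^ e) ^ m)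
    (D : Set ((i : A) → (AlgebraicClosure (GaloisField p e))ˣ))
    (hD : D = {u | ∃ g : A → Fin k, Function.Injective g ∧ (∀ i, μ (g i) = μ i.1) ∧
        ∀ i, ∃ m : ℕ, u i = t (g i) ^ (p ^ e) ^ m})
    (M : Set (Equiv.Perm (Fin k) × (Fin k → ℕ)))
    (hM : M = {w | (∀ i, μ (w.1 i) = μ i) ∧ (∀ i, w.2 i < μ i) ∧
        ∀ i : A, t (w.1⁻¹ i.1) ^ (p ^ e) ^ (w.2 i.1) = t' i})
    (Stab : Set (Equiv.Perm A × ((i : A) → ℕ)))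
    (hStab : Stab = {w | (∀ i : A, μ (w.1 i).1 = μ i.1) ∧ (∀ i, w.2 i < μ i.1) ∧
        ∀ i, t' (w.1⁻¹ i) ^ (p ^ e) ^ (w.2 i) = t' i})
    (Wc : Set (Equiv.Perm ((Aᶜ : Finset (Fin k))) × ((i : (Aᶜ : Finset (Fin k))) → ℕ)))
    (hWc : Wc = {w | (∀ i, μ (w.1 i).1 = μ i.1) ∧ ∀ i, w.2 i < μ i.1})
    (Mt Mt' : Multiset (ℕ × Quot relK))
    (hMt : Mt = Finset.univ.val.map (fun i => ((μ i, Quot.mk relK (t i)) : ℕ × Quot relK)))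
    (hMt' : Mt' = (Finset.univ : Finset A).val.map
        (fun i => ((μ i.1, Quot.mk relK (t' i)) : ℕ × Quot relK))) :
    Nat.card M =
      if t' ∈ D then
        Nat.card Stab * Nat.card Wc *
          ∏ pr ∈ Mt.toFinset, (Mt.count pr).choose (Mt'.count pr)
      else 0 := by
  subst hD hM hStab hWc hMt hMt'
  split_ifs with hD
  · obtain ⟨g, -, hgμ, hg⟩ := hD
    have hclasses (b : A) : ∃ i, (μ i, Quot.mk relK (t i)) = (μ b, Quot.mk relK (t' b)) := by
      obtain ⟨m, hm⟩ := hg b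
      exact ⟨g b, by rw [hgμ b, Quot.sound (hrelK ▸ ⟨m, hm⟩ : relK (t (g b)) (t' b))]⟩
    rw [natCard_transporter_eq _ relK hrelK A μ hμ t ht t' ht',
      natCard_stabilizer_eq _ relK hrelK (fun b : A => μ b) (fun b => hμ b) t' ht',
      natCard_relWeyl_eq fun x : ↥Aᶜ => μ x,
      natCard_perm_match_eq A μ (fun i => Quot.mk relK (t i)) fun b => Quot.mk relK (t' b),
      card_filter_map_val_eq_prod_choose _ _ fun c hc => ?_]
    · ring
    · obtain ⟨b, -, rfl⟩ := Multiset.mem_map.1 hc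
      exact hclasses b
  · refine Nat.card_eq_zero.2 (Or.inl ⟨fun ⟨⟨π, m⟩, hπ, _, hm⟩ => hD ?_⟩)
    refine ⟨fun b => π⁻¹ b, fun b c h => Subtype.ext (π⁻¹.injective h), fun b => ?_,
      fun b => ⟨m b, (hm b).symm⟩⟩
    simpa using (hπ (π⁻¹ b)).symm

/-- Concrete model of formula (3.6) of the paper (the count `#M(μ,μ',t,t')`), in the torus
model of `stmt13`/`stmt14` for `GL_n`.  Here `W_{GL_n}(T_μ)^F ≅ C_{S_n}(w_μ)` is modelled by
pairs `(π, m)` with `π` a `μ`-preserving permutation of the indices and `m i < μ i` the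
Frobenius-rotation exponents, acting by `(t ↦ (i ↦ t (π⁻¹ i)^{q^{m i}}))`.
`M(μ,μ',t,t')` is the set of such elements whose action carries `t` to an element restricting
to `t'` on the `A`-indexed subtorus `T_{μ'}`.  Then `#M` equals
`|W_{GL_{|μ'|}}(T_{μ'},t')^F| · |W_{GL_{|μ''|}}(T_{μ''})^F| · ∏_{[a]} C_{μ[t,a],μ'[t',a]}`
if `t' ∈ D(μ,μ',t)`, and `0` otherwise. -/
theorem stmt15 (p e k : ℕ) [Fact p.Prime] (he : 0 < e)
    (μ : Fin k → ℕ) (hμ : ∀ i, 0 < μ i)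
    (A : Finset (Fin k))
    (t : Fin k → (AlgebraicClosure (GaloisField p e))ˣ)
    (ht : ∀ i, t i ^ (p ^ e) ^ μ i = t i)
    (t' : (i : A) → (AlgebraicClosure (GaloisField p e))ˣ)
    (ht' : ∀ i : A, t' i ^ (p ^ e) ^ μ i.1 = t' i)
    (relK : (AlgebraicClosure (GaloisField p e))ˣ → (AlgebraicClosure (GaloisField p e))ˣ → Prop)
    (hrelK : relK = fun a b => ∃ m : ℕ, b = a ^ (p ^ e) ^ m)
    (D : Set ((i : A) → (AlgebraicClosure (GaloisField p e))ˣ))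
    (hD : D = {u | ∃ g : A → Fin k, Function.Injective g ∧ (∀ i, μ (g i) = μ i.1) ∧
        ∀ i, ∃ m : ℕ, u i = t (g i) ^ (p ^ e) ^ m})
    (M : Set (Equiv.Perm (Fin k) × (Fin k → ℕ)))
    (hM : M = {w | (∀ i, μ (w.1 i) = μ i) ∧ (∀ i, w.2 i < μ i) ∧
        ∀ i : A, t (w.1⁻¹ i.1) ^ (p ^ e) ^ (w.2 i.1) = t' i})
    (Stab : Set (Equiv.Perm A × ((i : A) → ℕ)))
    (hStab : Stab = {w | (∀ i : A, μ (w.1 i).1 = μ i.1) ∧ (∀ i, w.2 i < μ i.1) ∧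
        ∀ i, t' (w.1⁻¹ i) ^ (p ^ e) ^ (w.2 i) = t' i})
    (Wc : Set (Equiv.Perm ((Aᶜ : Finset (Fin k))) × ((i : (Aᶜ : Finset (Fin k))) → ℕ)))
    (hWc : Wc = {w | (∀ i, μ (w.1 i).1 = μ i.1) ∧ ∀ i, w.2 i < μ i.1})
    (Mt Mt' : Multiset (ℕ × Quot relK))
    (hMt : Mt = Finset.univ.val.map (fun i => ((μ i, Quot.mk relK (t i)) : ℕ × Quot relK)))
    (hMt' : Mt' = (Finset.univ : Finset A).val.map
        (fun i => ((μ i.1, Quot.mk relK (t' i)) : ℕ × Quot relK))) :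
    Nat.card M =
      if t' ∈ D then
        Nat.card Stab * Nat.card Wc *
          ∏ pr ∈ Mt.toFinset, (Mt.count pr).choose (Mt'.count pr)
      else 0 :=
  stmt15_general p e k μ hμ A t ht t' ht' relK hrelK D hD M hM Stab hStab Wc hWc Mt Mt' hMt hMt'
end
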